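/- arXiv:2102.06983 — 2 statements merged into one kernel-verified Lean document; each statement's English description precedes it below -/
import Mathlib

section
/- Let N be a normal subgroup of a finite group G and let K be a subgroup of G. Then Pr(K, G) ≤ Pr(KN/N, G/N) · Pr(N ∩ K, N), where KN/N is the image of K in the quotient group G/N and N ∩ K is regarded as a subgroup of N. -/
/-- The relative commuting probability `Pr(K, G)` of a subgroup `K` of a finite group `G`. -/
noncomputable def relCommProb {G : Type*} [Group G] (K : Subgroup G) : ℝ :=
  (Nat.card {p : K × G // Commute (p.1 : G) p.2} : ℝ) /
    ((Nat.card K : ℝ) * (Nat.card G : ℝ))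

/-!
Map a commuting pair `(x, y) ∈ K × G` to `((xN, yN), (c, n))`. Choosing, in the coset `yN`, a
representative `y₀` commuting with `x` gives `n = y₀⁻¹ y ∈ C_N(x)`; choosing then, in the coset
`xN`, a representative `x₀ ∈ K` commuting with `n` gives `c = x₀⁻¹ x ∈ C_{N ∩ K}(n)`. The pair is
recovered from `x = x₀ c` and `y = y₀ n`, so this is an injection from the commuting pairs of
`K × G` into the product of those of `KN/N × G/N` and of `(N ∩ K) × N`. Since
`|K| = |KN/N| |N ∩ K|` and `|G| = |G/N| |N|`, the denominators match.
-/

open QuotientGroup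

theorem Subgroup.card_subgroupOf {G : Type*} [Group G] (H K : Subgroup G) :
    Nat.card (H.subgroupOf K) = Nat.card ↥(H ⊓ K) := by
  rw [← inf_subgroupOf_right]
  exact Nat.card_congr (subgroupOfEquivOfLe inf_le_right).toEquiv

theorem Subgroup.card_eq_card_map_mul_card_subgroupOf_ker {G G' : Type*} [Group G] [Group G']
    (f : G →* G') (K : Subgroup G) :
    Nat.card K = Nat.card (K.map f) * Nat.card (f.ker.subgroupOf K) := by
  rw [← relIndex_ker, relIndex, mul_comm, card_mul_index]

theorem Subgroup.card_eq_card_map_mk'_mul_card_inf_subgroupOf {G : Type*} [Group G]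
    (N K : Subgroup G) [N.Normal] :
    Nat.card K = Nat.card (K.map (mk' N)) * Nat.card ((N ⊓ K).subgroupOf N) := by
  rw [K.card_eq_card_map_mul_card_subgroupOf_ker (mk' N), ker_mk', card_subgroupOf,
    inf_subgroupOf_left, card_subgroupOf, inf_comm]

namespace RelCommProb

abbrev CommPairs {G : Type*} [Group G] (K : Subgroup G) : Type _ :=
  {p : K × G // Commute (p.1 : G) p.2}

variable {G : Type*} [Group G] (N : Subgroup G)

open Classical in
noncomputable def commRep (H : Subgroup G) (z : G) (u : G ⧸ N) : G :=
  if h : ∃ g ∈ H, (g : G ⧸ N) = u ∧ Commute g z then h.choose else 1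

variable {N} {H : Subgroup G} {z g : G}

theorem commRep_spec (hg : g ∈ H) (hgz : Commute g z) :
    commRep N H z g ∈ H ∧ ((commRep N H z g : G) : G ⧸ N) = g ∧ Commute (commRep N H z g) z := by
  have h : ∃ g' ∈ H, (g' : G ⧸ N) = g ∧ Commute g' z := ⟨g, hg, rfl, hgz⟩
  rw [commRep, dif_pos h]
  exact h.choose_spec

theorem inv_commRep_mul_mem (hg : g ∈ H) (hgz : Commute g z) :
    (commRep N H z g)⁻¹ * g ∈ N ⊓ H :=
  have hrep := commRep_spec hg hgz
  Subgroup.mem_inf.mpr ⟨QuotientGroup.eq.mp hrep.2.1, mul_mem (inv_mem hrep.1) hg⟩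

theorem commute_inv_commRep_mul (hg : g ∈ H) (hgz : Commute g z) :
    Commute ((commRep N H z g)⁻¹ * g) z :=
  (commRep_spec hg hgz).2.2.inv_left.mul_left hgz

variable (N) (K : Subgroup G)

noncomputable def splitPair (p : G × G) : ((G ⧸ N) × (G ⧸ N)) × (G × G) :=
  let n := (commRep N ⊤ p.1 p.2)⁻¹ * p.2
  ((p.1, p.2), ((commRep N K n p.1)⁻¹ * p.1, n))

theorem splitPair_injective : Function.Injective (splitPair N K) := by
  rintro ⟨x₁, y₁⟩ ⟨x₂, y₂⟩ h
  simp only [splitPair, Prod.mk.injEq] at h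
  obtain ⟨⟨hx, hy⟩, hc, hn⟩ := h
  rw [hx, hn] at hc
  obtain rfl : x₁ = x₂ := mul_left_cancel hc
  rw [hy] at hn
  exact Prod.ext rfl (mul_left_cancel hn)

variable [N.Normal]

noncomputable def splitCommPair (s : CommPairs K) :
    CommPairs (K.map (mk' N)) × CommPairs ((N ⊓ K).subgroupOf N) :=
  let x : G := s.1.1
  let y : G := s.1.2
  let n := (commRep N ⊤ x y)⁻¹ * y
  let c := (commRep N K n x)⁻¹ * x
  have hn : n ∈ N ⊓ ⊤ := inv_commRep_mul_mem (Subgroup.mem_top y) s.2.symm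
  have hnx : Commute n x := commute_inv_commRep_mul (Subgroup.mem_top y) s.2.symm
  have hc : c ∈ N ⊓ K := inv_commRep_mul_mem s.1.1.2 hnx.symm
  have hcn : Commute c n := commute_inv_commRep_mul s.1.1.2 hnx.symm
  (⟨(⟨x, Subgroup.mem_map_of_mem _ s.1.1.2⟩, y), s.2.map (mk' N)⟩,
    ⟨(⟨⟨c, hc.1⟩, Subgroup.mem_subgroupOf.mpr hc⟩, ⟨n, hn.1⟩), Subtype.ext hcn⟩)

theorem splitCommPair_injective : Function.Injective (splitCommPair N K) := by
  intro s t h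
  have hsplit : splitPair N K (s.1.1, s.1.2) = splitPair N K (t.1.1, t.1.2) :=
    congrArg (fun q => (((q.1.1.1 : G ⧸ N), q.1.1.2), (((q.2.1.1 : N) : G), (q.2.1.2 : G)))) h
  obtain ⟨hx, hy⟩ := Prod.ext_iff.mp (splitPair_injective N K hsplit)
  exact Subtype.ext (Prod.ext (Subtype.ext hx) hy)

theorem card_commPairs_le [Finite G] :
    Nat.card (CommPairs K) ≤
      Nat.card (CommPairs (K.map (mk' N))) * Nat.card (CommPairs ((N ⊓ K).subgroupOf N)) := by
  rw [← Nat.card_prod]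
  exact Nat.card_le_card_of_injective _ (splitCommPair_injective N K)

end RelCommProb

theorem relCommProb_quotient_inequality
    {G : Type*} [Group G] [Finite G] (N : Subgroup G) [N.Normal] (K : Subgroup G) :
    relCommProb K ≤
      relCommProb (K.map (QuotientGroup.mk' N)) * relCommProb ((N ⊓ K).subgroupOf N) := by
  have hK : (Nat.card K : ℝ) =
      Nat.card (K.map (mk' N)) * Nat.card ((N ⊓ K).subgroupOf N) := by
    exact_mod_cast Subgroup.card_eq_card_map_mk'_mul_card_inf_subgroupOf N K
  have hG : (Nat.card G : ℝ) = Nat.card (G ⧸ N) * Nat.card N := by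
    exact_mod_cast Subgroup.card_eq_card_quotient_mul_card_subgroup N
  rw [relCommProb, relCommProb, relCommProb, div_mul_div_comm, hK, hG,
    mul_mul_mul_comm]
  gcongr
  exact_mod_cast RelCommProb.card_commPairs_le N K
end

section
/- Let G be a finite group and let X be a subset of G which is symmetric (X = X⁻¹, i.e., x ∈ X implies x⁻¹ ∈ X) and contains the identity element. If r is a positive integer such that (r+1)·|X| > |G|, then the subgroup generated by X equals X^{3r}, the set of all products of 3r elements of X. -/
/-!
Since `1 ∈ X`, the powers `X ^ n` increase with `n`, and once `X ^ (n + 1) = X ^ n` the set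
`X ^ n` is closed under products and inverses, hence is the subgroup generated by `X`.
Otherwise `X ^ (3 i) ⊊ X ^ (3 i + 1)` for all `i ≤ r`; pick `y i` in the difference. The
translates `y i • X` are pairwise disjoint: `y i * x = y j * x'` with `i < j` would give
`y j = y i * x * x'⁻¹ ∈ X ^ (3 i + 3) ⊆ X ^ (3 j)`. Hence `(r + 1) * |X| ≤ |G|`.
-/

open scoped Pointwise

theorem pow_add_eq_of_pow_succ_eq {M : Type*} [Monoid M] {a : M} {m : ℕ}
    (h : a ^ (m + 1) = a ^ m) (k : ℕ) : a ^ (m + k) = a ^ m := by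
  induction k with
  | zero => rfl
  | succ k ih => rw [← add_assoc, pow_succ, ih, ← pow_succ, h]

namespace Set

variable {G : Type*} [Group G] {X : Set G}

theorem pow_subset_subgroupClosure (X : Set G) (n : ℕ) : X ^ n ⊆ Subgroup.closure X := by
  induction n with
  | zero => simp
  | succ n ih =>
    rw [pow_succ]
    exact (mul_subset_mul ih Subgroup.subset_closure).trans (coe_mul_coe _).subset

theorem subgroupClosure_eq_pow_of_pow_succ_eq (h1 : (1 : G) ∈ X) (hsym : X⁻¹ = X) {m : ℕ}
    (h : X ^ (m + 1) = X ^ m) : (Subgroup.closure X : Set G) = X ^ m := by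
  let H : Subgroup G :=
    { carrier := X ^ m
      one_mem' := one_mem_pow h1
      mul_mem' := fun ha hb => by
        simpa only [← pow_add, pow_add_eq_of_pow_succ_eq h] using mul_mem_mul ha hb
      inv_mem' := fun ha => by
        simpa only [← inv_pow, hsym] using inv_mem_inv.2 ha }
  have hX_sub : X ⊆ X ^ m := by
    rw [← h, pow_succ]
    exact subset_mul_right X (one_mem_pow h1)
  exact Subset.antisymm ((Subgroup.closure_le H).2 hX_sub) (pow_subset_subgroupClosure X m)

theorem mem_pow_add_two_of_mul_eq_mul (hsym : X⁻¹ = X) {m : ℕ} {a b x x' : G}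
    (ha : a ∈ X ^ m) (hx : x ∈ X) (hx' : x' ∈ X) (h : a * x = b * x') : b ∈ X ^ (m + 2) := by
  have hb : b = a * x * x'⁻¹ := by rw [h, mul_inv_cancel_right]
  have hx'inv : x'⁻¹ ∈ X := hsym ▸ inv_mem_inv.2 hx'
  rw [hb, pow_succ, pow_succ]
  exact mul_mem_mul (mul_mem_mul ha hx) hx'inv

theorem succ_mul_ncard_le_card_of_forall_pow_ne [Finite G] (h1 : (1 : G) ∈ X) (hsym : X⁻¹ = X)
    (r : ℕ) (hgrow : ∀ i ≤ r, X ^ (3 * i) ≠ X ^ (3 * i + 1)) :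
    (r + 1) * X.ncard ≤ Nat.card G := by
  have hnew (i : Fin (r + 1)) : ∃ y, y ∈ X ^ (3 * (i : ℕ) + 1) ∧ y ∉ X ^ (3 * (i : ℕ)) :=
    exists_of_ssubset <| (pow_subset_pow_right h1 (Nat.le_succ _)).ssubset_of_ne <|
      hgrow i (Nat.lt_succ_iff.1 i.2)
  choose y hy_mem hy_not_mem using hnew
  have hne {i j : Fin (r + 1)} (hij : i < j) {x x' : G} (hx : x ∈ X) (hx' : x' ∈ X) :
      y i * x ≠ y j * x' := fun h =>
    hy_not_mem j <| pow_subset_pow_right h1 (by omega)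
      (mem_pow_add_two_of_mul_eq_mul hsym (hy_mem i) hx hx' h)
  have hinj : Function.Injective fun p : Fin (r + 1) × X => y p.1 * p.2 := by
    rintro ⟨i, x, hx⟩ ⟨j, x', hx'⟩ h
    rcases lt_trichotomy i j with hij | rfl | hji
    · exact absurd h (hne hij hx hx')
    · simpa using h
    · exact absurd h.symm (hne hji hx' hx)
  simpa [Nat.card_prod] using Nat.card_le_card_of_injective _ hinj

end Set

theorem symmetric_set_generation_general
    {G : Type*} [Group G] [Finite G] (X : Set G) (h1 : (1 : G) ∈ X) (hsym : X⁻¹ = X)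
    (r : ℕ) (hcard : (r + 1) * X.ncard > Nat.card G) :
    (Subgroup.closure X : Set G) = X ^ (3 * r) := by
  obtain ⟨i, hir, hstable⟩ : ∃ i ≤ r, X ^ (3 * i) = X ^ (3 * i + 1) := by
    by_contra! hgrow
    exact hcard.not_ge (Set.succ_mul_ncard_le_card_of_forall_pow_ne h1 hsym r hgrow)
  have hclosure := Set.subgroupClosure_eq_pow_of_pow_succ_eq h1 hsym hstable.symm
  refine (Set.pow_subset_subgroupClosure X _).antisymm' ?_
  rw [hclosure]
  exact Set.pow_subset_pow_right h1 (by omega)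

theorem symmetric_set_generation
    {G : Type*} [Group G] [Finite G] (X : Set G) (h1 : (1 : G) ∈ X) (hsym : X⁻¹ = X)
    (r : ℕ) (hr : 0 < r) (hcard : (r + 1) * X.ncard > Nat.card G) :
    (Subgroup.closure X : Set G) = X ^ (3 * r) :=
  symmetric_set_generation_general X h1 hsym r hcard
end
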